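/- Let d ∈ ℕ, 1 ≤ p < ∞ and α, β > 0. There exists a constant C > 0, depending only on d, p, α, β (and not on the simplex), such that for every d-simplex T ⊂ ℝ^d of unit volume, E_{p;α,β}(T) ≥ C · (diam T)², where diam T is the Euclidean diameter of T. -/

import Mathlib

open MeasureTheory Metric Set

/-- The asymmetric `L_p`-error of best approximation of `Q(x) = ∑ xⱼ²` by affine
functions `x ↦ ⟪a, x⟫ + c` on the set `T ⊆ ℝ^d`. -/
noncomputable def Epab (d : ℕ) (p α β : ℝ) (T : Set (EuclideanSpace ℝ (Fin d))) : ℝ :=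
  ⨅ (a : EuclideanSpace ℝ (Fin d)) (c : ℝ),
    (∫ x in T,
      (α * max ((∑ j, x j ^ 2) - ((inner ℝ a x : ℝ) + c)) 0 +
        β * max (-((∑ j, x j ^ 2) - ((inner ℝ a x : ℝ) + c))) 0) ^ p) ^ (1 / p)

/-!
For every affine `u`, the function `g = Q - u` satisfies the exact midpoint identity
`(g y + g z) / 2 - g ((y + z) / 2) = ‖y - z‖² / 4`. Apply it at `(z₀ + x) / 2`, `(z₁ + x) / 2`
and integrate over `x ∈ T`: each of the three resulting integrals is an integral of `g` over a
half-size homothetic copy of `T`, which lies in `T` by convexity, so it is at most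
`2 ^ d * ∫_T |g|`. Hence `‖z₀ - z₁‖² |T| ≤ 2 ^ (d + 5) ∫_T |g|`. Taking `z₀, z₁ ∈ T` at distance
`diam T`, bounding the asymmetric integrand below by `min α β * |g|`, and passing from `L¹` to
`L^p` by Jensen's inequality (`|T| = 1`) gives the theorem with `C = min α β / 2 ^ (d + 5)`.
-/

open Module

theorem IsCompact.exists_dist_eq_diam {X : Type*} [PseudoMetricSpace X] {s : Set X}
    (hs : IsCompact s) (hne : s.Nonempty) : ∃ x ∈ s, ∃ y ∈ s, dist x y = diam s := by
  obtain ⟨⟨x, y⟩, ⟨hx, hy⟩, hmax⟩ :=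
    (hs.prod hs).exists_isMaxOn (hne.prod hne) continuous_dist.continuousOn
  refine ⟨x, hx, y, hy, le_antisymm (dist_le_diam_of_mem hs.isBounded hx hy) ?_⟩
  exact diam_le_of_forall_dist_le dist_nonneg fun a ha b hb => hmax (mk_mem_prod ha hb)

theorem integral_le_integral_rpow_one_div {X : Type*} [MeasurableSpace X] {μ : Measure X}
    [IsProbabilityMeasure μ] {p : ℝ} (hp : 1 ≤ p) {f : X → ℝ} (hf₀ : 0 ≤ᵐ[μ] f)
    (hf : Integrable f μ) (hfp : Integrable (fun x => f x ^ p) μ) :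
    ∫ x, f x ∂μ ≤ (∫ x, f x ^ p ∂μ) ^ (1 / p) := by
  have jensen : (∫ x, f x ∂μ) ^ p ≤ ∫ x, f x ^ p ∂μ :=
    (convexOn_rpow hp).map_integral_le (continuousOn_id.rpow_const fun _ _ => Or.inr (by linarith))
      isClosed_Ici hf₀ hf hfp
  have hI : 0 ≤ ∫ x, f x ∂μ := integral_nonneg_of_ae hf₀
  calc ∫ x, f x ∂μ = ((∫ x, f x ∂μ) ^ p) ^ (1 / p) := by
        rw [← Real.rpow_mul hI, mul_one_div_cancel (by linarith), Real.rpow_one]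
    _ ≤ (∫ x, f x ^ p ∂μ) ^ (1 / p) := by gcongr

theorem min_mul_abs_le_mul_max_add_mul_max (α β t : ℝ) :
    min α β * |t| ≤ α * max t 0 + β * max (-t) 0 := by
  rcases le_total 0 t with ht | ht
  · rw [abs_of_nonneg ht, max_eq_left ht, max_eq_right (neg_nonpos.2 ht)]
    nlinarith [min_le_left α β]
  · rw [abs_of_nonpos ht, max_eq_right ht, max_eq_left (neg_nonneg.2 ht)]
    nlinarith [min_le_right α β]

section InnerProductSpace

variable {E : Type*} [NormedAddCommGroup E] [InnerProductSpace ℝ E]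

theorem midpoint_defect_norm_sq_sub_affine (a : E) (c : ℝ) (y z : E) :
    ((‖y‖ ^ 2 - (inner ℝ a y + c)) + (‖z‖ ^ 2 - (inner ℝ a z + c))) / 2
      - (‖midpoint ℝ y z‖ ^ 2 - (inner ℝ a (midpoint ℝ y z) + c)) = ‖y - z‖ ^ 2 / 4 := by
  rw [midpoint_eq_smul_add ℝ, invOf_eq_inv, norm_smul, inner_smul_right, inner_add_right]
  simp only [Real.norm_eq_abs, abs_inv, abs_two]
  linarith [parallelogram_law_with_norm ℝ y z]

variable [FiniteDimensional ℝ E] [MeasurableSpace E] [BorelSpace E] {μ : Measure E}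
  [μ.IsAddHaarMeasure]

theorem setIntegral_comp_midpoint_le {T : Set E} (hT : Convex ℝ T) (hTm : MeasurableSet T)
    {z : E} (hz : z ∈ T) {h : E → ℝ} (h₀ : ∀ x, 0 ≤ h x) (hh : IntegrableOn h T μ) :
    ∫ x in T, h (midpoint ℝ z x) ∂μ ≤ 2 ^ finrank ℝ E * ∫ x in T, h x ∂μ := by
  set F := T.indicator h
  have hmid : ∀ x, midpoint ℝ z x = (2⁻¹ : ℝ) • z + (2⁻¹ : ℝ) • x := fun x => by
    rw [midpoint_eq_smul_add ℝ, invOf_eq_inv, smul_add]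
  have hF : Integrable (fun x => F (midpoint ℝ z x)) μ := by
    simp only [hmid]
    exact ((hh.integrable_indicator hTm).comp_add_left _).comp_smul (by norm_num)
  calc ∫ x in T, h (midpoint ℝ z x) ∂μ = ∫ x in T, F (midpoint ℝ z x) ∂μ :=
        setIntegral_congr_fun hTm fun x hx => (indicator_of_mem (hT.midpoint_mem hz hx) h).symm
    _ ≤ ∫ x, F (midpoint ℝ z x) ∂μ :=
        setIntegral_le_integral hF <|
          Filter.Eventually.of_forall fun x => indicator_nonneg (fun y _ => h₀ y) _
    _ = 2 ^ finrank ℝ E * ∫ x in T, h x ∂μ := by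
        simp only [hmid]
        rw [Measure.integral_comp_smul μ (fun y => F ((2⁻¹ : ℝ) • z + y)),
          integral_add_left_eq_self, integral_indicator hTm]
        simp

theorem dist_sq_mul_measureReal_le_setIntegral_abs {T : Set E} (hT : Convex ℝ T)
    (hTc : IsCompact T) {g : E → ℝ} (hg : Continuous g)
    (hdefect : ∀ y z, (g y + g z) / 2 - g (midpoint ℝ y z) = ‖y - z‖ ^ 2 / 4)
    {z₀ z₁ : E} (h₀ : z₀ ∈ T) (h₁ : z₁ ∈ T) :
    dist z₀ z₁ ^ 2 * μ.real T ≤ 2 ^ (finrank ℝ E + 5) * ∫ x in T, |g x| ∂μ := by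
  have hTm : MeasurableSet T := hTc.measurableSet
  set I := fun z => ∫ x in T, g (midpoint ℝ z x) ∂μ
  have hint : ∀ z, IntegrableOn (fun x => g (midpoint ℝ z x)) T μ := fun z =>
    (hg.comp (by unfold midpoint; fun_prop)).continuousOn.integrableOn_compact hTc
  have hbound : ∀ z ∈ T, |I z| ≤ 2 ^ finrank ℝ E * ∫ x in T, |g x| ∂μ := fun z hz =>
    abs_integral_le_integral_abs.trans <| setIntegral_comp_midpoint_le hT hTm hz
      (fun _ => abs_nonneg _) (hg.abs.continuousOn.integrableOn_compact hTc)
  have hpoint : ∀ x, (g (midpoint ℝ z₀ x) + g (midpoint ℝ z₁ x)) / 2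
      - g (midpoint ℝ (midpoint ℝ z₀ z₁) x) = dist z₀ z₁ ^ 2 / 16 := by
    intro x
    have hm : midpoint ℝ (midpoint ℝ z₀ x) (midpoint ℝ z₁ x) =
        midpoint ℝ (midpoint ℝ z₀ z₁) x := by
      simp only [midpoint_eq_smul_add ℝ, invOf_eq_inv]; module
    have hd : midpoint ℝ z₀ x - midpoint ℝ z₁ x = (2⁻¹ : ℝ) • (z₀ - z₁) := by
      simp only [midpoint_eq_smul_add ℝ, invOf_eq_inv]; module
    rw [← hm, hdefect, hd, norm_smul, dist_eq_norm]
    norm_num; ring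
  have hsplit : (I z₀ + I z₁) / 2 - I (midpoint ℝ z₀ z₁) = dist z₀ z₁ ^ 2 / 16 * μ.real T := by
    have hmean : IntegrableOn (fun x => (g (midpoint ℝ z₀ x) + g (midpoint ℝ z₁ x)) / 2) T μ :=
      ((hint z₀).add (hint z₁)).div_const 2
    have := setIntegral_congr_fun (μ := μ) hTm fun x _ => hpoint x
    rw [integral_sub hmean (hint _), integral_div, integral_add (hint z₀) (hint z₁),
      setIntegral_const, smul_eq_mul] at this
    rw [this, mul_comm]
  have b₀ := abs_le.1 (hbound z₀ h₀)
  have b₁ := abs_le.1 (hbound z₁ h₁)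
  have bm := abs_le.1 (hbound _ (hT.midpoint_mem h₀ h₁))
  rw [pow_add]
  linarith

end InnerProductSpace

theorem asymmetric_Lp_error_lower_bound_diam_general
    (d : ℕ) (p α β : ℝ) (hp : 1 ≤ p) (hα : 0 < α) (hβ : 0 < β) :
    ∃ C : ℝ, 0 < C ∧
      ∀ v : Fin (d + 1) → EuclideanSpace ℝ (Fin d),
        AffineIndependent ℝ v →
        volume (convexHull ℝ (Set.range v)) = 1 →
        Epab d p α β (convexHull ℝ (Set.range v)) ≥
          C * (Metric.diam (convexHull ℝ (Set.range v))) ^ 2 := by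
  refine ⟨min α β / 2 ^ (d + 5), by positivity, fun v _ hvol => ?_⟩
  set T := convexHull ℝ (range v)
  have hTc : IsCompact T := (finite_range v).isCompact_convexHull ℝ
  have : IsProbabilityMeasure (volume.restrict T) := ⟨by rw [Measure.restrict_apply_univ, hvol]⟩
  obtain ⟨z₀, h₀, z₁, h₁, hdiam⟩ := hTc.exists_dist_eq_diam (range_nonempty v).convexHull
  rw [ge_iff_le, Epab]
  refine le_ciInf fun a => le_ciInf fun c => ?_
  simp only [← EuclideanSpace.real_norm_sq_eq]
  set g := fun x : EuclideanSpace ℝ (Fin d) => ‖x‖ ^ 2 - (inner ℝ a x + c)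
  have hg : Continuous g :=
    (continuous_norm.pow 2).sub ((continuous_const.inner continuous_id).add continuous_const)
  have hF : Continuous fun x => α * max (g x) 0 + β * max (-g x) 0 := by fun_prop
  have key := dist_sq_mul_measureReal_le_setIntegral_abs (μ := volume) (convex_convexHull ℝ _)
    hTc hg (midpoint_defect_norm_sq_sub_affine a c) h₀ h₁
  rw [measureReal_def, hvol, ENNReal.toReal_one, mul_one, finrank_euclideanSpace_fin, hdiam]
    at key
  calc min α β / 2 ^ (d + 5) * diam T ^ 2 ≤ min α β * ∫ x in T, |g x| := by
        rw [div_mul_eq_mul_div, div_le_iff₀ (by positivity), mul_assoc]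
        gcongr
        linarith
    _ ≤ ∫ x in T, (α * max (g x) 0 + β * max (-g x) 0) := by
        rw [← integral_const_mul]
        exact integral_mono (hg.abs.continuousOn.integrableOn_compact hTc |>.const_mul _)
          (hF.continuousOn.integrableOn_compact hTc)
          fun x => min_mul_abs_le_mul_max_add_mul_max α β (g x)
    _ ≤ _ := integral_le_integral_rpow_one_div hp
        (Filter.Eventually.of_forall fun x => by positivity)
        (hF.continuousOn.integrableOn_compact hTc)
        ((hF.rpow_const fun _ => Or.inr (by linarith)).continuousOn.integrableOn_compact hTc)

/-- There is a constant `C > 0`, depending only on `d`, `p`, `α`, `β`, such that the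
asymmetric `L_p`-error of best affine approximation of `Q` on any unit-volume
`d`-simplex `T` is at least `C * (diam T)²`. -/
theorem asymmetric_Lp_error_lower_bound_diam
    (d : ℕ) (hd : 0 < d) (p α β : ℝ) (hp : 1 ≤ p) (hα : 0 < α) (hβ : 0 < β) :
    ∃ C : ℝ, 0 < C ∧
      ∀ v : Fin (d + 1) → EuclideanSpace ℝ (Fin d),
        AffineIndependent ℝ v →
        volume (convexHull ℝ (Set.range v)) = 1 →
        Epab d p α β (convexHull ℝ (Set.range v)) ≥
          C * (Metric.diam (convexHull ℝ (Set.range v))) ^ 2 :=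
  asymmetric_Lp_error_lower_bound_diam_general d p α β hp hα hβ
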